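/- Let Y be a finite type equipped with a metric d, and let μ be a joint distribution on Y × Bool × Bool (construct, prediction, protected attribute Z) with Pr[Z = z] > 0 for both z. Suppose there is a function ℓ : Y → ℝ with 0 ≤ ℓ y ≤ 1 such that μ(y, p, z) = (∑_{p'} μ(y, p', z)) · (if p = 1 then ℓ y else 1 − ℓ y) for all y, p, z (the prediction depends on the construct through the same likelihood function ℓ in both groups, expressing WYSIWYG together with equalized odds), and suppose ℓ is ρ-Lipschitz for some ρ ≥ 0. Then the output disparity |Pr[prediction = 1 | Z = 0] − Pr[prediction = 1 | Z = 1]| is at most ρ · W1(construct | Z = 0, construct | Z = 1), where W1 is the earthmover distance with respect to d between the two conditional construct distributions. -/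
import Mathlib


/-- A probability distribution on a finite type: nonnegative and summing to 1. -/
def IsDist {Y : Type*} [Fintype Y] (p : Y → ℝ) : Prop :=
  (∀ y, 0 ≤ p y) ∧ ∑ y, p y = 1

/-- A coupling of `p0` and `p1`: a distribution on `Y × Y` with first marginal `p0`
and second marginal `p1`. -/
def IsCoupling {Y : Type*} [Fintype Y] (γ : Y × Y → ℝ) (p0 p1 : Y → ℝ) : Prop :=
  ((∀ x, 0 ≤ γ x) ∧ ∑ x, γ x = 1) ∧
    (∀ u, ∑ v, γ (u, v) = p0 u) ∧ (∀ v, ∑ u, γ (u, v) = p1 v)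

/-- The earthmover (Wasserstein-1) distance between distributions `p0` and `p1` on a
finite type with respect to a cost `d`: the infimum over couplings of the expected
cost. -/
noncomputable def W1 {Y : Type*} [Fintype Y] (d : Y → Y → ℝ) (p0 p1 : Y → ℝ) : ℝ :=
  sInf {x : ℝ | ∃ γ : Y × Y → ℝ, IsCoupling γ p0 p1 ∧ x = ∑ u, ∑ v, γ (u, v) * d u v}

/-- `d` is a metric on `Y`. -/
def IsMetric {Y : Type*} (d : Y → Y → ℝ) : Prop :=
  (∀ u, d u u = 0) ∧ (∀ u v, u ≠ v → 0 < d u v) ∧ (∀ u v, d u v = d v u) ∧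
    (∀ u v w, d u w ≤ d u v + d v w)

/-- In a joint distribution on construct × prediction × Z (with Bool-valued
prediction), the probability that `Z = z`. -/
def prZ {Y : Type*} [Fintype Y] (μ : Y × Bool × Bool → ℝ) (z : Bool) : ℝ :=
  ∑ y, ∑ p, μ (y, p, z)

/-- The conditional distribution of the construct given `Z = z`. -/
noncomputable def consCond {Y : Type*} [Fintype Y]
    (μ : Y × Bool × Bool → ℝ) (z : Bool) : Y → ℝ :=
  fun y => (∑ p, μ (y, p, z)) / prZ μ z

/-- The conditional probability `Pr[prediction = 1 ∣ Z = z]`. -/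
noncomputable def prPosCond {Y : Type*} [Fintype Y]
    (μ : Y × Bool × Bool → ℝ) (z : Bool) : ℝ :=
  (∑ y, μ (y, true, z)) / prZ μ z

/-- If the Bool-valued prediction depends on the construct through the
same likelihood function `ℓ` in both groups (expressing WYSIWYG together with equalized
odds), and `ℓ` is `ρ`-Lipschitz with respect to a metric `d`, then the output disparity
`|Pr[prediction = 1 | Z=0] - Pr[prediction = 1 | Z=1]|` is at most
`ρ · W1(construct | Z=0, construct | Z=1)`. -/
theorem lipschitz_likelihood_output_disparity_le_W1
    {Y : Type*} [Fintype Y] (d : Y → Y → ℝ) (hd : IsMetric d)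
    (μ : Y × Bool × Bool → ℝ) (hμ : IsDist μ) (hZ : ∀ z, 0 < prZ μ z)
    (ℓ : Y → ℝ) (hℓ01 : ∀ y, 0 ≤ ℓ y ∧ ℓ y ≤ 1)
    (hfac : ∀ (y : Y) (p z : Bool),
      μ (y, p, z) = (∑ p', μ (y, p', z)) * (if p then ℓ y else 1 - ℓ y))
    (ρ : ℝ) (hρ : 0 ≤ ρ) (hlip : ∀ u v, |ℓ u - ℓ v| ≤ ρ * d u v) :
    |prPosCond μ false - prPosCond μ true| ≤ ρ * W1 d (consCond μ false) (consCond μ true) := by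
  set S := {x : ℝ | ∃ γ : Y × Y → ℝ, IsCoupling γ (consCond μ false) (consCond μ true) ∧
      x = ∑ u, ∑ v, γ (u, v) * d u v} with hS
  -- conditional distributions are distributions
  have hdist : ∀ z, IsDist (consCond μ z) := by
    intro z
    constructor
    · intro y
      exact div_nonneg (Finset.sum_nonneg fun p _ => hμ.1 _) (hZ z).le
    · simp only [consCond]
      rw [← Finset.sum_div, div_eq_one_iff_eq (hZ z).ne']
      rfl
  -- prPosCond as expectation of ℓ
  have hpos : ∀ z, prPosCond μ z = ∑ y, consCond μ z y * ℓ y := by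
    intro z
    have h1 : ∀ y, μ (y, true, z) = (∑ p, μ (y, p, z)) * ℓ y := fun y => by
      simpa using hfac y true z
    simp only [prPosCond, consCond]
    simp_rw [h1, div_mul_eq_mul_div]
    rw [← Finset.sum_div]
  -- key: disparity bounded by ρ * x for every x in S
  have key : ∀ x ∈ S, |prPosCond μ false - prPosCond μ true| ≤ ρ * x := by
    rintro x ⟨γ, ⟨⟨hγ0, _⟩, hm0, hm1⟩, rfl⟩
    rw [hpos false, hpos true]
    have e0 : ∑ y, consCond μ false y * ℓ y = ∑ u, ∑ v, γ (u, v) * ℓ u := by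
      refine Finset.sum_congr rfl fun u _ => ?_
      rw [← hm0 u, Finset.sum_mul]
    have e1 : ∑ y, consCond μ true y * ℓ y = ∑ u, ∑ v, γ (u, v) * ℓ v := by
      rw [Finset.sum_comm]
      refine Finset.sum_congr rfl fun v _ => ?_
      rw [← hm1 v, Finset.sum_mul]
    rw [e0, e1, ← Finset.sum_sub_distrib, Finset.mul_sum]
    calc |∑ u, ((∑ v, γ (u, v) * ℓ u) - ∑ v, γ (u, v) * ℓ v)|
        ≤ ∑ u, |(∑ v, γ (u, v) * ℓ u) - ∑ v, γ (u, v) * ℓ v| :=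
          Finset.abs_sum_le_sum_abs _ _
      _ ≤ ∑ u, ρ * ∑ v, γ (u, v) * d u v := by
          refine Finset.sum_le_sum fun u _ => ?_
          rw [← Finset.sum_sub_distrib]
          calc |∑ v, (γ (u, v) * ℓ u - γ (u, v) * ℓ v)|
              ≤ ∑ v, |γ (u, v) * ℓ u - γ (u, v) * ℓ v| := Finset.abs_sum_le_sum_abs _ _
            _ ≤ ∑ v, γ (u, v) * (ρ * d u v) := by
                refine Finset.sum_le_sum fun v _ => ?_
                rw [← mul_sub, abs_mul, abs_of_nonneg (hγ0 (u, v))]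
                exact mul_le_mul_of_nonneg_left (hlip u v) (hγ0 (u, v))
            _ = ρ * ∑ v, γ (u, v) * d u v := by
                rw [Finset.mul_sum]; exact Finset.sum_congr rfl fun v _ => by ring
  -- S is nonempty: product coupling
  have hne : S.Nonempty := by
    refine ⟨_, (fun x : Y × Y => consCond μ false x.1 * consCond μ true x.2),
      ⟨⟨?_, ?_⟩, ?_, ?_⟩, rfl⟩
    · exact fun x => mul_nonneg ((hdist false).1 x.1) ((hdist true).1 x.2)
    · rw [Fintype.sum_prod_type]
      simp_rw [← Finset.mul_sum]
      rw [(hdist true).2]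
      simpa using (hdist false).2
    · intro u
      simp only
      rw [← Finset.mul_sum, (hdist true).2, mul_one]
    · intro v
      simp only
      rw [← Finset.sum_mul, (hdist false).2, one_mul]
  rcases eq_or_lt_of_le hρ with h0 | hρpos
  · obtain ⟨x, hx⟩ := hne
    have := key x hx
    rw [← h0] at this ⊢
    simpa using this
  · have hW : |prPosCond μ false - prPosCond μ true| / ρ ≤
        W1 d (consCond μ false) (consCond μ true) := by
      refine le_csInf hne fun x hx => ?_
      rw [div_le_iff₀ hρpos, mul_comm]
      exact key x hx
    calc |prPosCond μ false - prPosCond μ true|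
        = ρ * (|prPosCond μ false - prPosCond μ true| / ρ) := by
          field_simp
      _ ≤ ρ * W1 d (consCond μ false) (consCond μ true) :=
          mul_le_mul_of_nonneg_left hW hρ
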